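/- arXiv:2603.28036 — 2 statements merged into one kernel-verified Lean document; each statement's English description precedes it below -/
import Mathlib

section
/- For every pointed Kripke model (M,s), every k ∈ ℕ, and every finite P ⊆ 𝒫, there exists a unique d-canonical formula δ ∈ D^P_k such that M,s ⊨ δ. -/
/-!
Common framework: multi-agent epistemic modal logic with distributed knowledge.
Agents are `Fin n`, atoms are natural numbers.
-/

namespace DKLogic

/-- Formulas of the language `L_D`: atoms, negation, conjunction, disjunction and the
distributed-knowledge modality `D_B` for nonempty sets `B` of agents (together with the
constants `⊤`/`⊥`, which the paper uses as the empty conjunction/disjunction). -/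
inductive Formula (n : ℕ) : Type
  | top : Formula n
  | bot : Formula n
  | atom : ℕ → Formula n
  | neg : Formula n → Formula n
  | and : Formula n → Formula n → Formula n
  | or : Formula n → Formula n → Formula n
  | D : {B : Finset (Fin n) // B.Nonempty} → Formula n → Formula n

namespace Formula

/-- Modal depth of a formula. -/
def depth {n : ℕ} : Formula n → ℕ
  | top => 0
  | bot => 0
  | atom _ => 0
  | neg φ => depth φ
  | and φ ψ => max (depth φ) (depth ψ)
  | or φ ψ => max (depth φ) (depth ψ)
  | D _ φ => depth φ + 1

/-- The atoms occurring in a formula. -/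
def atoms {n : ℕ} : Formula n → Finset ℕ
  | top => ∅
  | bot => ∅
  | atom q => {q}
  | neg φ => atoms φ
  | and φ ψ => atoms φ ∪ atoms ψ
  | or φ ψ => atoms φ ∪ atoms ψ
  | D _ φ => atoms φ

end Formula

/-- A Kripke model over world type `W` with `n` agents. -/
structure KModel (n : ℕ) (W : Type) where
  R : Fin n → W → W → Prop
  V : W → Set ℕ

/-- The distributed accessibility relation `R_B = ⋂_{i ∈ B} R_i`. -/
def KModel.RB {n : ℕ} {W : Type} (M : KModel n W) (B : Finset (Fin n)) (s t : W) : Prop :=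
  ∀ i ∈ B, M.R i s t

/-- Satisfaction. -/
def Sat {n : ℕ} {W : Type} (M : KModel n W) : W → Formula n → Prop
  | _, .top => True
  | _, .bot => False
  | s, .atom q => q ∈ M.V s
  | s, .neg φ => ¬ Sat M s φ
  | s, .and φ ψ => Sat M s φ ∧ Sat M s ψ
  | s, .or φ ψ => Sat M s φ ∨ Sat M s ψ
  | s, .D B φ => ∀ t : W, M.RB B.1 s t → Sat M t φ

/-- Seriality of a relation. -/
def Serial {W : Type} (R : W → W → Prop) : Prop := ∀ x, ∃ y, R x y

/-- Euclideanness of a relation. -/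
def Euclidean {W : Type} (R : W → W → Prop) : Prop := ∀ x y z, R x y → R x z → R y z

/-- The six modal systems. -/
inductive MSys : Type
  | K | D | T | K45 | KD45 | S5

/-- `L`-models: frame conditions on each accessibility relation for each system. -/
def IsModel {n : ℕ} {W : Type} : MSys → KModel n W → Prop
  | .K, _ => True
  | .D, M => ∀ i, Serial (M.R i)
  | .T, M => ∀ i, Reflexive (M.R i)
  | .K45, M => ∀ i, Transitive (M.R i) ∧ Euclidean (M.R i)
  | .KD45, M => ∀ i, Serial (M.R i) ∧ Transitive (M.R i) ∧ Euclidean (M.R i)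
  | .S5, M => ∀ i, Reflexive (M.R i) ∧ Transitive (M.R i) ∧ Euclidean (M.R i)

/-- Semantic consequence over `L`-models. -/
def Entails {n : ℕ} (L : MSys) (φ ψ : Formula n) : Prop :=
  ∀ (W : Type) (M : KModel n W), IsModel L M → ∀ s : W, Sat M s φ → Sat M s ψ

/-- Semantic equivalence over `L`-models. -/
def EquivL {n : ℕ} (L : MSys) (φ ψ : Formula n) : Prop :=
  Entails L φ ψ ∧ Entails L ψ φ

/-- `L`-satisfiability. -/
def SatL {n : ℕ} (L : MSys) (φ : Formula n) : Prop :=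
  ∃ (W : Type) (M : KModel n W) (s : W), IsModel L M ∧ Sat M s φ

/-- Collective `p`-bisimulation between two pointed models. -/
def CollPBisim {n : ℕ} {W W' : Type} (M : KModel n W) (s : W) (M' : KModel n W') (s' : W')
    (p : ℕ) : Prop :=
  ∃ ρ : W → W' → Prop, ρ s s' ∧
    ∀ u u', ρ u u' →
      ((∀ q : ℕ, q ≠ p → (q ∈ M.V u ↔ q ∈ M'.V u')) ∧
       (∀ B : Finset (Fin n), B.Nonempty → ∀ v, M.RB B u v → ∃ v', M'.RB B u' v' ∧ ρ v v') ∧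
       (∀ B : Finset (Fin n), B.Nonempty → ∀ v', M'.RB B u' v' → ∃ v, M.RB B u v ∧ ρ v v'))

/-- `ψ` is a result of forgetting `p` in `φ` in system `L`
(written `dforget_L(φ,p) ≡_L ψ` in the paper). -/
def IsForget {n : ℕ} (L : MSys) (φ : Formula n) (p : ℕ) (ψ : Formula n) : Prop :=
  ψ.atoms ⊆ φ.atoms.erase p ∧
  (∀ (W W' : Type) (M : KModel n W) (M' : KModel n W') (s : W) (s' : W'),
      IsModel L M → IsModel L M' → Sat M s φ → CollPBisim M s M' s' p → Sat M' s' ψ) ∧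
  (∀ (W' : Type) (M' : KModel n W') (s' : W'),
      IsModel L M' → Sat M' s' ψ →
      ∃ (W : Type) (M : KModel n W) (s : W), IsModel L M ∧ Sat M s φ ∧ CollPBisim M s M' s' p)

/-- `L` is closed under forgetting: `dforget_L(φ,p)` exists (as an `L`-satisfiable formula)
for every `L`-satisfiable `φ` and every atom `p`. -/
def ClosedUnderForgetting {n : ℕ} (L : MSys) : Prop :=
  ∀ (φ : Formula n) (p : ℕ), SatL L φ → ∃ ψ : Formula n, SatL L ψ ∧ IsForget L φ p ψ

/-- `ψ` is a uniform interpolant of `φ` in `L` over `P \ {p}`. -/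
def IsUI {n : ℕ} (L : MSys) (P : Finset ℕ) (p : ℕ) (φ ψ : Formula n) : Prop :=
  SatL L ψ ∧ ψ.atoms ⊆ P.erase p ∧
  ∀ χ : Formula n, p ∉ χ.atoms → (Entails L φ χ ↔ Entails L ψ χ)

/-- The uniform interpolation property for the system `L`. -/
def HasUIP {n : ℕ} (L : MSys) : Prop :=
  ∀ (P : Finset ℕ) (p : ℕ) (φ : Formula n),
    p ∈ P → φ.atoms ⊆ P → SatL L φ → ∃ ψ : Formula n, IsUI L P p φ ψ

/-! ### Canonical formulas -/

/-- Big conjunction of a list of formulas (`⊤` for the empty list). -/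
def bigAnd {n : ℕ} : List (Formula n) → Formula n
  | [] => .top
  | φ :: l => .and φ (bigAnd l)

/-- Big disjunction of a list of formulas (`⊥` for the empty list). -/
def bigOr {n : ℕ} : List (Formula n) → Formula n
  | [] => .bot
  | φ :: l => .or φ (bigOr l)

/-- An injective numerical code of formulas, used to fix a canonical ordering. -/
def fcode {n : ℕ} : Formula n → ℕ
  | .top => Nat.pair 0 0
  | .bot => Nat.pair 1 0
  | .atom q => Nat.pair 2 q
  | .neg φ => Nat.pair 3 (fcode φ)
  | .and φ ψ => Nat.pair 4 (Nat.pair (fcode φ) (fcode ψ))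
  | .or φ ψ => Nat.pair 5 (Nat.pair (fcode φ) (fcode ψ))
  | .D B φ => Nat.pair 6 (Nat.pair (B.1.sum fun i => 2 ^ (i : ℕ)) (fcode φ))

/-- Insert a formula into a strictly `fcode`-sorted list (dropping duplicates). -/
def insertF {n : ℕ} (φ : Formula n) : List (Formula n) → List (Formula n)
  | [] => [φ]
  | ψ :: l =>
      if fcode φ < fcode ψ then φ :: ψ :: l
      else if fcode φ = fcode ψ then ψ :: l
      else ψ :: insertF φ l

/-- The canonical (sorted, duplicate-free) list representing the set of formulas in `l`. -/
def normList {n : ℕ} (l : List (Formula n)) : List (Formula n) := l.foldr insertF []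

/-- The minterm of `P` that is positive exactly on `S`. -/
def minterm {n : ℕ} (P S : Finset ℕ) : Formula n :=
  bigAnd ((P.sort (· ≤ ·)).map fun q =>
    if q ∈ S then Formula.atom q else Formula.neg (Formula.atom q))

/-- The subset of `Fin n` whose characteristic bits are those of `m`. -/
def natToFinset (n m : ℕ) : Finset (Fin n) :=
  Finset.univ.filter fun i => m.testBit (i : ℕ)

/-- A canonical enumeration of all nonempty subsets of the agent set. -/
def neSubsets (n : ℕ) : List {B : Finset (Fin n) // B.Nonempty} :=
  ((List.range (2 ^ n)).map (natToFinset n)).filterMap fun B =>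
    if h : B.Nonempty then some ⟨B, h⟩ else none

/-- `∇_B Φ = D_B (⋁Φ) ∧ ⋀_{φ ∈ Φ} ¬ D_B ¬ φ`. -/
def nabla {n : ℕ} (B : {B : Finset (Fin n) // B.Nonempty}) (Φ : List (Formula n)) : Formula n :=
  Formula.and (Formula.D B (bigOr Φ))
    (bigAnd (Φ.map fun φ => Formula.neg (Formula.D B (Formula.neg φ))))

/-- Underlying data of a d-canonical formula: a set of (positive) atoms together with,
for every set `B` of agents, a list of successor data. -/
inductive CData (n : ℕ) : Type
  | mk (S : Finset ℕ) (succ : Finset (Fin n) → List (CData n)) : CData n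

/-- The positive-atom component. -/
def CData.S {n : ℕ} : CData n → Finset ℕ
  | mk S _ => S

/-- The `B`-successor data. -/
def CData.succ {n : ℕ} : CData n → Finset (Fin n) → List (CData n)
  | mk _ f => f

/-- The d-canonical formula of depth `k` over `P` determined by the data `d`:
`δ_0 ∧ ⋀_{B} ∇_B Φ_B`. -/
def toFormula {n : ℕ} (P : Finset ℕ) : ℕ → CData n → Formula n
  | 0, d => minterm P (d.S ∩ P)
  | (k+1), d =>
      Formula.and (minterm P (d.S ∩ P))
        (bigAnd ((neSubsets n).map fun B =>
          nabla B (normList ((d.succ B.1).map fun c => toFormula P k c))))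

/-- `D^P_k`: the set of d-canonical formulas of depth `k` over `P`. -/
def DP {n : ℕ} (P : Finset ℕ) (k : ℕ) : Set (Formula n) := Set.range (toFormula P k)

/-- `R_B(δ)` for `δ` the level-`k` canonical formula with data `d`:
the set of `B`-successor canonical formulas (of level `k - 1`). -/
def RBset {n : ℕ} (P : Finset ℕ) (k : ℕ) (d : CData n) (B : Finset (Fin n)) :
    Set (Formula n) :=
  {φ | ∃ c ∈ d.succ B, φ = toFormula P (k - 1) c}

/-- One pruning step `δ ↦ δ^↓` on data (first argument: the level of the input). -/
def downD {n : ℕ} : ℕ → CData n → CData n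
  | 0, d => d
  | 1, d => CData.mk d.S (fun _ => [])
  | (k+2), d => CData.mk d.S (fun B => (d.succ B).map fun c => downD (k+1) c)

/-- `l`-fold pruning `δ ↦ δ^{↓l}` on data (first argument: the level of the input). -/
def downIter {n : ℕ} : ℕ → ℕ → CData n → CData n
  | _, 0, d => d
  | k, (l+1), d => downIter (k-1) l (downD k d)

/-- Truncation `δ ↦ δ^{↑l}` on data (first argument: the level of the input). -/
def upD {n : ℕ} : ℕ → ℕ → CData n → CData n
  | _, 0, d => CData.mk d.S (fun _ => [])
  | 0, (_+1), d => d
  | (k+1), (l+1), d => CData.mk d.S (fun B => (d.succ B).map fun c => upD k l c)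

/-- The canonical formula `δ` of level `k` with data `d`. -/
def cf {n : ℕ} (P : Finset ℕ) (k : ℕ) (d : CData n) : Formula n := toFormula P k d

/-- `δ^{↓l}` (a canonical formula of level `k - l`). -/
def cfDown {n : ℕ} (P : Finset ℕ) (k l : ℕ) (d : CData n) : Formula n :=
  toFormula P (k - l) (downIter k l d)

/-- `δ^{↑l}` (a canonical formula of level `min k l`). -/
def cfUp {n : ℕ} (P : Finset ℕ) (k l : ℕ) (d : CData n) : Formula n :=
  toFormula P (min k l) (upD k l d)

/-- Literal elimination: `φ^p` replaces every occurrence of `¬p` by `⊤` and subsequently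
every remaining occurrence of `p` by `⊤`. -/
def elim {n : ℕ} (p : ℕ) : Formula n → Formula n
  | .top => .top
  | .bot => .bot
  | .atom q => if q = p then .top else .atom q
  | .neg (.atom q) => if q = p then .top else .neg (.atom q)
  | .neg φ => .neg (elim p φ)
  | .and φ ψ => .and (elim p φ) (elim p ψ)
  | .or φ ψ => .or (elim p φ) (elim p ψ)
  | .D B φ => .D B (elim p φ)


/-!
Both halves go by induction on `k`. At level `k + 1` the minterm conjunct is forced by the
valuation at `s`, and since every `B`-successor of `s` satisfies exactly one level-`k` canonical
formula, `∇_B Φ_B` holds at `s` exactly when `Φ_B` lists the formulas of the `B`-successors.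
For existence this set must be finite, which holds because there are only finitely many canonical
formulas of each level. For uniqueness, `normList` turns the set into a unique list, since it
sorts by the injective code `fcode`.
-/

section Semantics

variable {n : ℕ} {W : Type} (M : KModel n W)

theorem sat_bigAnd (s : W) (l : List (Formula n)) :
    Sat M s (bigAnd l) ↔ ∀ φ ∈ l, Sat M s φ := by
  induction l with
  | nil => simp [bigAnd, Sat]
  | cons φ l ih => simp [bigAnd, Sat, ih]

theorem sat_bigOr (s : W) (l : List (Formula n)) :
    Sat M s (bigOr l) ↔ ∃ φ ∈ l, Sat M s φ := by
  induction l with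
  | nil => simp [bigOr, Sat]
  | cons φ l ih => simp [bigOr, Sat, ih]

theorem sat_minterm (s : W) (P S : Finset ℕ) :
    Sat M s (minterm (n := n) P S) ↔ ∀ q ∈ P, (q ∈ S ↔ q ∈ M.V s) := by
  simp only [minterm, sat_bigAnd, List.forall_mem_map, Finset.mem_sort]
  refine forall₂_congr fun q _ => ?_
  split_ifs with hq <;> simp [Sat, hq]

open Classical in
theorem sat_minterm_inter (s : W) (P S : Finset ℕ) :
    Sat M s (minterm (n := n) P (S ∩ P)) ↔ S ∩ P = {q ∈ P | q ∈ M.V s} := by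
  rw [sat_minterm, Finset.ext_iff]
  simp only [Finset.mem_inter, Finset.mem_filter]
  grind

theorem sat_nabla (s : W) (B : {B : Finset (Fin n) // B.Nonempty}) (Φ : List (Formula n)) :
    Sat M s (nabla B Φ) ↔
      (∀ t, M.RB B.1 s t → ∃ φ ∈ Φ, Sat M t φ) ∧ ∀ φ ∈ Φ, ∃ t, M.RB B.1 s t ∧ Sat M t φ := by
  simp [nabla, Sat, sat_bigAnd, sat_bigOr]

theorem sat_nabla_of_forall_mem_iff {s : W} {B : {B : Finset (Fin n) // B.Nonempty}}
    {Φ : List (Formula n)} {f : W → Formula n} (hf : ∀ t, Sat M t (f t))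
    (hΦ : ∀ φ, φ ∈ Φ ↔ ∃ t, M.RB B.1 s t ∧ f t = φ) :
    Sat M s (nabla B Φ) := by
  refine (sat_nabla M s B Φ).2 ⟨fun t ht => ⟨f t, (hΦ _).2 ⟨t, ht, rfl⟩, hf t⟩, fun φ hφ => ?_⟩
  obtain ⟨t, ht, rfl⟩ := (hΦ φ).1 hφ
  exact ⟨t, ht, hf t⟩

theorem mem_of_sat_nabla {s : W} {B : {B : Finset (Fin n) // B.Nonempty}}
    {Φ Ψ : List (Formula n)} (hΦ : Sat M s (nabla B Φ)) (hΨ : Sat M s (nabla B Ψ))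
    (h : ∀ t, ∀ φ ∈ Φ, ∀ ψ ∈ Ψ, Sat M t φ → Sat M t ψ → φ = ψ) {φ : Formula n}
    (hφ : φ ∈ Φ) : φ ∈ Ψ := by
  obtain ⟨t, ht, hφt⟩ := ((sat_nabla M s B Φ).1 hΦ).2 φ hφ
  obtain ⟨ψ, hψ, hψt⟩ := ((sat_nabla M s B Ψ).1 hΨ).1 t ht
  rwa [h t φ hφ ψ hψ hφt hψt]

end Semantics

section NormList

variable {n : ℕ}

theorem sum_two_pow_injective :
    Function.Injective fun B : Finset (Fin n) => ∑ i ∈ B, 2 ^ (i : ℕ) := by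
  intro B C h
  have : ∑ i ∈ B.map Fin.valEmbedding, 2 ^ i = ∑ i ∈ C.map Fin.valEmbedding, 2 ^ i := by
    simpa using h
  exact Finset.map_injective _ (Finset.geomSum_injective le_rfl this)

theorem fcode_injective : Function.Injective (fcode (n := n)) := by
  intro φ
  induction φ with
  | D B _ ih =>
    intro ψ h
    cases ψ <;> simp only [fcode, Nat.pair_eq_pair] at h <;> try grind
    rw [Subtype.ext (sum_two_pow_injective h.2.1), ih h.2.2]
  | top | bot | atom | neg _ ih | and _ _ ih₁ ih₂ | or _ _ ih₁ ih₂ =>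
    intro ψ h
    cases ψ <;> simp only [fcode, Nat.pair_eq_pair] at h <;> grind

theorem mem_insertF {φ x : Formula n} {l : List (Formula n)} :
    x ∈ insertF φ l ↔ x = φ ∨ x ∈ l := by
  induction l with
  | nil => simp [insertF]
  | cons ψ l ih =>
    rw [insertF]
    split_ifs with _ h
    · simp
    · rw [fcode_injective h]
      simp
    · simp only [List.mem_cons, ih]
      tauto

theorem pairwise_insertF {φ : Formula n} {l : List (Formula n)}
    (h : l.Pairwise fun a b => fcode a < fcode b) :
    (insertF φ l).Pairwise fun a b => fcode a < fcode b := by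
  induction l with
  | nil => simp [insertF]
  | cons ψ l ih =>
    rw [List.pairwise_cons] at h
    rw [insertF]
    split_ifs with h₁ h₂
    · exact List.pairwise_cons.2 ⟨by grind, List.pairwise_cons.2 h⟩
    · exact List.pairwise_cons.2 h
    · refine List.pairwise_cons.2 ⟨fun b hb => ?_, ih h.2⟩
      rcases mem_insertF.1 hb with rfl | hb
      · omega
      · exact h.1 b hb

theorem pairwise_normList (l : List (Formula n)) :
    (normList l).Pairwise fun a b => fcode a < fcode b := by
  induction l with
  | nil => exact List.Pairwise.nil
  | cons φ l ih => exact pairwise_insertF ih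

@[simp]
theorem mem_normList {x : Formula n} {l : List (Formula n)} : x ∈ normList l ↔ x ∈ l := by
  induction l with
  | nil => simp [normList]
  | cons φ l ih =>
    change x ∈ insertF φ (normList l) ↔ _
    rw [mem_insertF, ih, List.mem_cons]

theorem normList_congr {l l' : List (Formula n)} (h : ∀ x, x ∈ l ↔ x ∈ l') :
    normList l = normList l' := by
  refine List.map_injective_iff.2 fcode_injective
    (List.Pairwise.eq_of_mem_iff (r := (· < ·)) ?_ ?_ fun a => ?_)
  · exact List.pairwise_map.2 (pairwise_normList l)
  · exact List.pairwise_map.2 (pairwise_normList l')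
  · simp [h]

end NormList

section Canonical

variable {n : ℕ}

open Classical in
theorem finite_DP (P : Finset ℕ) : ∀ k, (DP (n := n) P k).Finite
  | 0 => (P.powerset.finite_toSet.image (minterm P)).subset <| by
      rintro _ ⟨d, rfl⟩
      exact ⟨d.S ∩ P, by simp, rfl⟩
  | k + 1 => by
    let assemble (p : Finset ℕ × ({B : Finset (Fin n) // B.Nonempty} → Finset (Formula n))) :
        Formula n :=
      .and (minterm P p.1) (bigAnd ((neSubsets n).map fun B => nabla B (normList (p.2 B).toList)))
    refine ((P.powerset.finite_toSet.prod <| Set.Finite.pi fun _ =>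
      (finite_DP P k).toFinset.powerset.finite_toSet).image assemble).subset ?_
    rintro _ ⟨d, rfl⟩
    refine ⟨(d.S ∩ P, fun B => ((d.succ B.1).map (toFormula P k)).toFinset), ?_, ?_⟩
    · simp [Set.subset_def, DP]
    · simp only [assemble, toFormula]
      congr
      funext B
      exact congrArg (nabla B) (normList_congr fun x => by simp)

variable {W : Type} (M : KModel n W)

open Classical in
theorem exists_sat_toFormula (P : Finset ℕ) : ∀ (k : ℕ) (s : W), ∃ d : CData n,
    Sat M s (toFormula P k d)
  | 0, s => ⟨.mk {q ∈ P | q ∈ M.V s} fun _ => [], by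
      simp [toFormula, CData.S, sat_minterm_inter]⟩
  | k + 1, s => by
    choose g hg using exists_sat_toFormula P k
    have hfin (B : Finset (Fin n)) :
        ((fun t => toFormula P k (g t)) '' {t | M.RB B s t}).Finite :=
      (finite_DP P k).subset (by rintro _ ⟨t, -, rfl⟩; exact ⟨g t, rfl⟩)
    -- `L B` is a finite set of `B`-successors of `s` realising all their level-`k` formulas
    choose L _ hL using fun B => Finset.subset_set_image_iff.1 (hfin B).coe_toFinset.subset
    refine ⟨.mk {q ∈ P | q ∈ M.V s} fun B => (L B).toList.map g, ?_⟩
    simp only [toFormula, Sat, CData.S, CData.succ, sat_minterm_inter, sat_bigAnd,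
      List.forall_mem_map]
    refine ⟨by simp, fun B _ => sat_nabla_of_forall_mem_iff M hg fun φ => ?_⟩
    simpa using Finset.ext_iff.1 (hL B) φ

theorem eq_of_mem_DP_of_sat (P : Finset ℕ) : ∀ (k : ℕ) {s : W} {φ ψ : Formula n},
    φ ∈ DP P k → ψ ∈ DP P k → Sat M s φ → Sat M s ψ → φ = ψ
  | 0, s, _, _, ⟨d, rfl⟩, ⟨d', rfl⟩, h, h' => by
    simp only [toFormula, sat_minterm_inter] at h h' ⊢
    rw [h, h']
  | k + 1, s, _, _, ⟨d, rfl⟩, ⟨d', rfl⟩, h, h' => by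
    simp only [toFormula, Sat, sat_minterm_inter, sat_bigAnd, List.forall_mem_map] at h h' ⊢
    have ih (t : W) (c c' : List (CData n)) :
        ∀ φ ∈ normList (c.map (toFormula P k)), ∀ ψ ∈ normList (c'.map (toFormula P k)),
          Sat M t φ → Sat M t ψ → φ = ψ := by
      simp only [mem_normList, List.mem_map]
      rintro _ ⟨e, -, rfl⟩ _ ⟨e', -, rfl⟩
      exact eq_of_mem_DP_of_sat P k ⟨e, rfl⟩ ⟨e', rfl⟩
    rw [h.1, h'.1]
    refine congrArg _ (congrArg _ (List.map_congr_left fun B hB => congrArg _ ?_))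
    refine normList_congr fun φ => ?_
    rw [← mem_normList, ← mem_normList (l := List.map _ _)]
    exact ⟨mem_of_sat_nabla M (h.2 B hB) (h'.2 B hB) (ih · _ _),
      mem_of_sat_nabla M (h'.2 B hB) (h.2 B hB) (ih · _ _)⟩

end Canonical

/-- every pointed Kripke model satisfies a unique member of `D^P_k`. -/
theorem unique_canonical_of_model {n : ℕ} {W : Type} (M : KModel n W) (s : W)
    (k : ℕ) (P : Finset ℕ) :
    ∃! δ : Formula n, δ ∈ DP P k ∧ Sat M s δ := by
  obtain ⟨d, hd⟩ := exists_sat_toFormula M P k s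
  exact ⟨toFormula P k d, ⟨⟨d, rfl⟩, hd⟩, fun δ ⟨hδ, hδs⟩ =>
    eq_of_mem_DP_of_sat M P k hδ ⟨d, rfl⟩ hδs hd⟩

end DKLogic
end

section
/- Let P ⊆ 𝒫 be finite, δ ∈ D^P_k a d-canonical formula, and p an atom. Then δ ⊨ δ^p, i.e., every pointed Kripke model satisfying δ satisfies the remainder δ^p of eliminating p. -/
/-!
Common framework: multi-agent epistemic modal logic with distributed knowledge.
Agents are `Fin n`, atoms are natural numbers.
-/

namespace DKLogic

/-!
Literal elimination only replaces literals by `⊤`, so it weakens every formula in which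
negation stands only on atoms or inside diamonds `¬D_B¬φ`. A d-canonical formula is built
from minterms by `∧`, `∨`, boxes and such diamonds, hence entails its remainder.
-/

inductive Formula.IsNNF {n : ℕ} : Formula n → Prop
  | top : IsNNF .top
  | bot : IsNNF .bot
  | atom (q : ℕ) : IsNNF (.atom q)
  | negAtom (q : ℕ) : IsNNF (.neg (.atom q))
  | and {φ ψ : Formula n} : IsNNF φ → IsNNF ψ → IsNNF (.and φ ψ)
  | or {φ ψ : Formula n} : IsNNF φ → IsNNF ψ → IsNNF (.or φ ψ)
  | box (B : {B : Finset (Fin n) // B.Nonempty}) {φ : Formula n} : IsNNF φ → IsNNF (.D B φ)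
  -- `◇p` is excluded: elimination turns `¬D_B¬p` into the unsatisfiable `¬D_B⊤`.
  | dia (B : {B : Finset (Fin n) // B.Nonempty}) {φ : Formula n} :
      IsNNF φ → (∀ q, φ ≠ .atom q) → IsNNF (.neg (.D B (.neg φ)))

section Elimination

variable {n : ℕ} (p : ℕ)

theorem elim_neg_of_ne_atom {φ : Formula n} (h : ∀ q, φ ≠ .atom q) :
    elim p (.neg φ) = .neg (elim p φ) := by
  cases φ <;> simp_all [elim]

theorem Formula.IsNNF.sat_elim {φ : Formula n} (hφ : φ.IsNNF) {W : Type} (M : KModel n W) :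
    ∀ s, Sat M s φ → Sat M s (elim p φ) := by
  induction hφ with
  | top | bot => exact fun _ h => h
  | atom q | negAtom q => intro s h; by_cases hq : q = p <;> simp_all [elim, Sat]
  | and _ _ ih₁ ih₂ => exact fun s h => ⟨ih₁ s h.1, ih₂ s h.2⟩
  | or _ _ ih₁ ih₂ => exact fun s h => h.imp (ih₁ s) (ih₂ s)
  | box B _ ih => exact fun s h t hst => ih t (h t hst)
  | dia B _ hne ih =>
    intro s h
    rw [elim_neg_of_ne_atom p (by simp), elim, elim_neg_of_ne_atom p hne]
    simp only [Sat, not_forall, not_not] at h ⊢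
    obtain ⟨t, hst, ht⟩ := h
    exact ⟨t, hst, ih t ht⟩

end Elimination

section CanonicalFormulas

variable {n : ℕ}

theorem Formula.IsNNF.bigAnd {l : List (Formula n)} (h : ∀ φ ∈ l, φ.IsNNF) :
    (DKLogic.bigAnd l).IsNNF := by
  induction l with
  | nil => exact .top
  | cons φ l ih => exact .and (h φ (by simp)) (ih fun ψ hψ => h ψ (by simp [hψ]))

theorem Formula.IsNNF.bigOr {l : List (Formula n)} (h : ∀ φ ∈ l, φ.IsNNF) :
    (DKLogic.bigOr l).IsNNF := by
  induction l with
  | nil => exact .bot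
  | cons φ l ih => exact .or (h φ (by simp)) (ih fun ψ hψ => h ψ (by simp [hψ]))

theorem Formula.IsNNF.nabla (B : {B : Finset (Fin n) // B.Nonempty}) {Φ : List (Formula n)}
    (h : ∀ φ ∈ Φ, φ.IsNNF ∧ ∀ q, φ ≠ .atom q) : (DKLogic.nabla B Φ).IsNNF :=
  .and (.box B (.bigOr fun φ hφ => (h φ hφ).1)) <| .bigAnd <| by
    simp only [List.mem_map]
    rintro _ ⟨φ, hφ, rfl⟩
    exact .dia B (h φ hφ).1 (h φ hφ).2

theorem isNNF_minterm (P S : Finset ℕ) : (minterm (n := n) P S).IsNNF := by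
  refine .bigAnd ?_
  simp only [List.mem_map]
  rintro _ ⟨q, -, rfl⟩
  split
  · exact .atom q
  · exact .negAtom q

theorem eq_or_mem_of_mem_insertF {φ x : Formula n} {l : List (Formula n)}
    (h : x ∈ insertF φ l) : x = φ ∨ x ∈ l := by
  induction l with
  | nil => simpa [insertF] using h
  | cons ψ l ih =>
    simp only [insertF] at h
    split_ifs at h <;> simp only [List.mem_cons] at h ⊢ <;> tauto

theorem mem_of_mem_normList {x : Formula n} {l : List (Formula n)} (h : x ∈ normList l) :
    x ∈ l := by
  induction l with
  | nil => simp [normList] at h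
  | cons φ l ih =>
    rcases eq_or_mem_of_mem_insertF h with rfl | h
    · exact List.mem_cons_self
    · exact List.mem_cons_of_mem φ (ih h)

theorem toFormula_ne_atom (P : Finset ℕ) (k : ℕ) (d : CData n) (q : ℕ) :
    toFormula P k d ≠ .atom q := by
  cases k <;> cases h : P.sort (· ≤ ·) <;> simp [toFormula, minterm, bigAnd, h]

theorem isNNF_toFormula (P : Finset ℕ) : ∀ (k : ℕ) (d : CData n), (toFormula P k d).IsNNF
  | 0, _ => isNNF_minterm _ _
  | k + 1, d => .and (isNNF_minterm _ _) <| .bigAnd <| by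
    simp only [List.mem_map]
    rintro _ ⟨B, -, rfl⟩
    refine .nabla B fun φ hφ => ?_
    obtain ⟨c, -, rfl⟩ := List.mem_map.mp (mem_of_mem_normList hφ)
    exact ⟨isNNF_toFormula P k c, toFormula_ne_atom P k c⟩

end CanonicalFormulas

/-- every d-canonical formula entails its remainder of literal elimination
over all Kripke models. -/
theorem canonical_entails_elim {n : ℕ} (P : Finset ℕ) (k : ℕ) (δ : Formula n)
    (hδ : δ ∈ DP P k) (p : ℕ) :
    Entails MSys.K δ (elim p δ) := by
  obtain ⟨d, rfl⟩ := hδ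
  exact fun _ M _ => (isNNF_toFormula P k d).sat_elim p M

end DKLogic
end
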